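/- Let g : (k+1)^U → ℝ be monotonically non-decreasing and k-submodular, let c be a non-negative modular function with c(∅,…,∅) = 0, fix 𝐕 ∈ (k+1)^U and m ≥ 1. Let 𝐒_i ≼ 𝐕, let OPT ≼ 𝐕 with |supp(OPT)| ≤ m, define Ψ_i(𝐒, j, e) = max{0, (1 − 1/m)^{m−(i+1)} Δ_{e,j} g(𝐒) − c({e})}, and let (j*, e*) maximize (1 − 1/m)^{m−(i+1)} Δ_{e,j} g(𝐒_i) − c({e}) over j ∈ ⟦k⟧ and e ∈ V_j \ S_{i,j}. Then Ψ_i(𝐒_i, j*, e*) ≥ (1/m) [ (1 − 1/m)^{m−(i+1)} ( g(OPT) − g(𝐒_i) ) − c(OPT) ]. -/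

import Mathlib

/-- A `k`-tuple of subsets is pairwise disjoint (i.e. it is an element of `(k+1)^U`). -/
def PwDisj {α : Type*} {k : ℕ} (S : Fin k → Finset α) : Prop :=
  ∀ i j : Fin k, i ≠ j → Disjoint (S i) (S j)

/-- The meet `𝐒 ⊓ 𝐓`, with `i`-th component `S i ∩ T i`. -/
def kInf {α : Type*} [DecidableEq α] {k : ℕ} (S T : Fin k → Finset α) :
    Fin k → Finset α := fun i => S i ∩ T i

/-- The join `𝐒 ⊔ 𝐓`, with `i`-th component `(S i ∪ T i) \ ∪_{j ≠ i} (S j ∪ T j)`. -/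
def kSup {α : Type*} [DecidableEq α] {k : ℕ} (S T : Fin k → Finset α) :
    Fin k → Finset α :=
  fun i => (S i ∪ T i) \ ((Finset.univ.erase i).biUnion fun j => S j ∪ T j)

/-- The value of the modular function determined by the singleton costs `c` on a tuple. -/
def cSet {α : Type*} {k : ℕ} (c : α → ℝ) (S : Fin k → Finset α) : ℝ :=
  ∑ i, ∑ e ∈ S i, c e

/-- The distorted marginal quantity
`(1 − 1/m)^{m−(i+1)} Δ_{e,j} g(𝐒) − c({e})` at step `i`. -/
noncomputable def qGain {α : Type*} [DecidableEq α] {k : ℕ}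
    (g : (Fin k → Finset α) → ℝ) (c : α → ℝ) (m i : ℕ)
    (S : Fin k → Finset α) (j : Fin k) (e : α) : ℝ :=
  ((1 : ℝ) - 1 / (m : ℝ)) ^ (m - (i + 1)) *
      (g (Function.update S j (insert e (S j))) - g S) - c e

/-- `Ψ_i(𝐒, j, e) = max {0, (1 − 1/m)^{m−(i+1)} Δ_{e,j} g(𝐒) − c({e})}`. -/
noncomputable def Psi {α : Type*} [DecidableEq α] {k : ℕ}
    (g : (Fin k → Finset α) → ℝ) (c : α → ℝ) (m i : ℕ)
    (S : Fin k → Finset α) (j : Fin k) (e : α) : ℝ :=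
  max 0 (qGain g c m i S j e)


/- Add the elements of `OPT` missing from `𝐒_i` one at a time. By `k`-submodularity marginal
gains only shrink as the tuple grows, so `g(𝐒_i ∪ OPT) − g(𝐒_i)` (componentwise union) is at
most the sum of the marginal gains at `𝐒_i` itself. Each scaled gain is at most `Ψ_i(𝐒_i, j*, e*) + c({e})` by the
choice of `(j*, e*)`, and there are at most `m` of them, whence
`(1 − 1/m)^{m−(i+1)} (g(OPT) − g(𝐒_i)) ≤ m Ψ_i(𝐒_i, j*, e*) + c(OPT)`. -/

open Finset Function

section

variable {α : Type*} {k : ℕ}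

theorem PwDisj.mono {S T : Fin k → Finset α} (hT : PwDisj T) (hST : ∀ l, S l ⊆ T l) :
    PwDisj S :=
  fun i j hij => (hT i j hij).mono (hST i) (hST j)

variable [DecidableEq α]

theorem PwDisj.update_insert {S : Fin k → Finset α} (hS : PwDisj S) {e : α}
    (he : ∀ l, e ∉ S l) (j : Fin k) : PwDisj (update S j (insert e (S j))) := by
  intro a b hab
  rcases eq_or_ne a j with rfl | ha
  · rw [update_self, update_of_ne hab.symm, disjoint_insert_left]
    exact ⟨he b, hS a b hab⟩
  rcases eq_or_ne b j with rfl | hb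
  · rw [update_self, update_of_ne ha, disjoint_insert_right]
    exact ⟨he a, hS a b hab⟩
  rw [update_of_ne ha, update_of_ne hb]
  exact hS a b hab

theorem kSup_eq_union {S T : Fin k → Finset α} (h : PwDisj fun l => S l ∪ T l) :
    kSup S T = fun l => S l ∪ T l := by
  funext l
  refine sdiff_eq_self_of_disjoint ((disjoint_biUnion_right _ _ _).2 fun l' hl' => ?_)
  exact h l l' (ne_of_mem_erase hl').symm

theorem card_sigma_sdiff_le {S T : Fin k → Finset α} (hT : PwDisj T) :
    (univ.sigma fun l => T l \ S l).card ≤ (univ.biUnion T).card := by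
  rw [card_sigma, card_biUnion fun a _ b _ hab => hT a b hab]
  exact sum_le_sum fun l _ => card_le_card sdiff_subset

theorem sum_sigma_sdiff_le_cSet {c : α → ℝ} (hc : ∀ e, 0 ≤ c e) (S T : Fin k → Finset α) :
    ∑ x ∈ univ.sigma (fun l => T l \ S l), c x.2 ≤ cSet c T := by
  rw [sum_sigma, cSet]
  exact sum_le_sum fun l _ => sum_le_sum_of_subset_of_nonneg sdiff_subset fun e _ _ => hc e

def marginalGain (g : (Fin k → Finset α) → ℝ) (S : Fin k → Finset α) (j : Fin k) (e : α) :
    ℝ :=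
  g (update S j (insert e (S j))) - g S

variable {g : (Fin k → Finset α) → ℝ}

theorem marginalGain_antitone
    (hgsub : ∀ S T : Fin k → Finset α, PwDisj S → PwDisj T →
      g (kInf S T) + g (kSup S T) ≤ g S + g T) {S S' : Fin k → Finset α} (hS' : PwDisj S')
    (hSS' : ∀ l, S l ⊆ S' l) {e : α} (he : ∀ l, e ∉ S' l) (j : Fin k) :
    marginalGain g S' j e ≤ marginalGain g S j e := by
  set B := update S j (insert e (S j))
  set B' := update S' j (insert e (S' j))
  have hB' : PwDisj B' := hS'.update_insert he j
  have hBB' : ∀ l, B l ⊆ B' l := by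
    intro l
    rcases eq_or_ne l j with rfl | hl
    · simpa [B, B'] using insert_subset_insert e (hSS' l)
    · simpa [B, B', hl] using hSS' l
  have hinf : kInf S' B = S := by
    funext l
    rcases eq_or_ne l j with rfl | hl
    · simp [kInf, B, he l, inter_eq_right.2 (hSS' l)]
    · simp [kInf, B, hl, inter_eq_right.2 (hSS' l)]
  have hunion : (fun l => S' l ∪ B l) = B' := by
    funext l
    rcases eq_or_ne l j with rfl | hl
    · simp [B, B', union_eq_left.2 (hSS' l)]
    · simp [B, B', hl, union_eq_left.2 (hSS' l)]
  -- The componentwise union of `S'` and `B` is pairwise disjoint, so their `⊔` is that union.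
  have key := hgsub S' B hS' (hB'.mono hBB')
  rw [hinf, kSup_eq_union (hunion ▸ hB'), hunion] at key
  simp only [marginalGain]
  linarith

theorem sub_le_sum_marginalGain
    (hgsub : ∀ S T : Fin k → Finset α, PwDisj S → PwDisj T →
      g (kInf S T) + g (kSup S T) ≤ g S + g T) {S : Fin k → Finset α}
    (X : Finset (Σ _ : Fin k, α)) (hX : ∀ x ∈ X, x.2 ∉ S x.1) {U : Fin k → Finset α}
    (hU : PwDisj U) (hmemU : ∀ l e, e ∈ U l ↔ e ∈ S l ∨ ⟨l, e⟩ ∈ X) :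
    g U - g S ≤ ∑ x ∈ X, marginalGain g S x.1 x.2 := by
  induction X using Finset.induction_on generalizing U with
  | empty =>
    have : U = S := funext fun l => Finset.ext fun e => by simp [hmemU]
    simp [this]
  | @insert x X hxX ih =>
    obtain ⟨j, e⟩ := x
    set U' := update U j ((U j).erase e)
    have heU : e ∈ U j := (hmemU j e).2 (Or.inr (mem_insert_self _ _))
    have hmemU' : ∀ l a, a ∈ U' l ↔ a ∈ S l ∨ ⟨l, a⟩ ∈ X := by
      intro l a
      rcases eq_or_ne l j with rfl | hl
      · rcases eq_or_ne a e with rfl | ha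
        · simp [U', hX _ (mem_insert_self _ _), hxX]
        · simp [U', ha, hmemU]
      · simp [U', hl, hmemU]
    have hU' : PwDisj U' := hU.mono fun l => by
      rcases eq_or_ne l j with rfl | hl
      · simpa [U'] using erase_subset e (U l)
      · simp [U', hl]
    have heU' : ∀ l, e ∉ U' l := by
      intro l
      rcases eq_or_ne l j with rfl | hl
      · simp [U']
      · simpa [U', hl] using fun h => disjoint_left.1 (hU j l hl.symm) heU h
    have hUeq : U = update U' j (insert e (U' j)) := by
      simp [U', insert_erase heU]
    have hstep := marginalGain_antitone hgsub hU'
      (fun l a ha => (hmemU' l a).2 (Or.inl ha)) heU' j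
    have hrest := ih (fun x hx => hX x (mem_insert_of_mem hx)) hU' hmemU'
    rw [sum_insert hxX]
    rw [marginalGain, ← hUeq] at hstep
    linarith

theorem sub_le_sum_marginalGain_union
    (hgsub : ∀ S T : Fin k → Finset α, PwDisj S → PwDisj T →
      g (kInf S T) + g (kSup S T) ≤ g S + g T) {S T : Fin k → Finset α}
    (hST : PwDisj fun l => S l ∪ T l) :
    g (fun l => S l ∪ T l) - g S ≤
      ∑ x ∈ univ.sigma (fun l => T l \ S l), marginalGain g S x.1 x.2 :=
  sub_le_sum_marginalGain hgsub _ (fun _ hx => (mem_sdiff.1 (mem_sigma.1 hx).2).2) hST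
    fun l e => by
      simp only [mem_union, mem_sigma, mem_univ, mem_sdiff, true_and]
      tauto

end

theorem Psi_lower_bound_general
    {α : Type*} [DecidableEq α] {k : ℕ}
    (g : (Fin k → Finset α) → ℝ) (c : α → ℝ) (hc : ∀ e : α, 0 ≤ c e)
    (m : ℕ) (V : Fin k → Finset α) (hV : PwDisj V)
    (hgmono : ∀ S T : Fin k → Finset α, PwDisj S → PwDisj T →
      (∀ i, S i ⊆ T i) → g S ≤ g T)
    (hgsub : ∀ S T : Fin k → Finset α, PwDisj S → PwDisj T →
      g (kInf S T) + g (kSup S T) ≤ g S + g T)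
    (i : ℕ)
    (Si : Fin k → Finset α) (hSV : ∀ j, Si j ⊆ V j)
    (OPT : Fin k → Finset α) (hOPTdisj : PwDisj OPT)
    (hOPTle : ∀ j, OPT j ⊆ V j)
    (hOPTcard : (Finset.univ.biUnion OPT).card ≤ m)
    (jstar : Fin k) (estar : α)
    (hmax : ∀ j : Fin k, ∀ e ∈ V j \ Si j,
      qGain g c m i Si j e ≤ qGain g c m i Si jstar estar) :
    (1 / (m : ℝ)) * (((1 : ℝ) - 1 / (m : ℝ)) ^ (m - (i + 1)) * (g OPT - g Si) - cSet c OPT) ≤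
      Psi g c m i Si jstar estar := by
  set β := ((1 : ℝ) - 1 / (m : ℝ)) ^ (m - (i + 1))
  set P := Psi g c m i Si jstar estar
  set X := univ.sigma fun l => OPT l \ Si l
  have hβ : 0 ≤ β := pow_nonneg (sub_nonneg.2 (one_div (m : ℝ) ▸ m.cast_inv_le_one)) _
  have hP : 0 ≤ P := le_max_left _ _
  have hgain : ∀ x ∈ X, β * marginalGain g Si x.1 x.2 ≤ P + c x.2 := by
    rintro ⟨l, e⟩ hx
    have hle := hmax l e (sdiff_subset_sdiff (hOPTle l) subset_rfl (mem_sigma.1 hx).2)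
    exact sub_le_iff_le_add.1 (hle.trans (le_max_right 0 _))
  have hunion : PwDisj fun l => Si l ∪ OPT l :=
    hV.mono fun l => union_subset (hSV l) (hOPTle l)
  have hgrowth : g OPT - g Si ≤ ∑ x ∈ X, marginalGain g Si x.1 x.2 :=
    (sub_le_sub_right (hgmono _ _ hOPTdisj hunion fun _ => subset_union_right) _).trans
      (sub_le_sum_marginalGain_union hgsub hunion)
  have hcard : (X.card : ℝ) ≤ m := by
    exact_mod_cast (card_sigma_sdiff_le hOPTdisj).trans hOPTcard
  have hbound : β * (g OPT - g Si) ≤ P * m + cSet c OPT :=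
    calc β * (g OPT - g Si) ≤ ∑ x ∈ X, β * marginalGain g Si x.1 x.2 := by
          rw [← mul_sum]; exact mul_le_mul_of_nonneg_left hgrowth hβ
      _ ≤ ∑ x ∈ X, (P + c x.2) := sum_le_sum hgain
      _ = P * X.card + ∑ x ∈ X, c x.2 := by
          rw [sum_add_distrib, sum_const, nsmul_eq_mul, mul_comm]
      _ ≤ P * m + cSet c OPT :=
          add_le_add (mul_le_mul_of_nonneg_left hcard hP) (sum_sigma_sdiff_le_cSet hc Si OPT)
  rw [one_div_mul_eq_div]
  exact div_le_of_le_mul₀ m.cast_nonneg hP (sub_le_iff_le_add.2 hbound)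

/-- Lower bound for `Ψ_i`:
`Ψ_i(𝐒_i, j*, e*) ≥ (1/m) [ (1 − 1/m)^{m−(i+1)} ( g(OPT) − g(𝐒_i) ) − c(OPT) ]`. -/
theorem Psi_lower_bound
    {α : Type*} [Fintype α] [DecidableEq α] {k : ℕ}
    (g : (Fin k → Finset α) → ℝ) (c : α → ℝ) (hc : ∀ e : α, 0 ≤ c e)
    (m : ℕ) (hm : 1 ≤ m) (V : Fin k → Finset α) (hV : PwDisj V)
    (hgmono : ∀ S T : Fin k → Finset α, PwDisj S → PwDisj T →
      (∀ i, S i ⊆ T i) → g S ≤ g T)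
    (hgsub : ∀ S T : Fin k → Finset α, PwDisj S → PwDisj T →
      g (kInf S T) + g (kSup S T) ≤ g S + g T)
    (i : ℕ)
    (Si : Fin k → Finset α) (hSdisj : PwDisj Si) (hSV : ∀ j, Si j ⊆ V j)
    (OPT : Fin k → Finset α) (hOPTdisj : PwDisj OPT)
    (hOPTle : ∀ j, OPT j ⊆ V j)
    (hOPTcard : (Finset.univ.biUnion OPT).card ≤ m)
    (jstar : Fin k) (estar : α)
    (hmem : estar ∈ V jstar \ Si jstar)
    (hmax : ∀ j : Fin k, ∀ e ∈ V j \ Si j,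
      qGain g c m i Si j e ≤ qGain g c m i Si jstar estar) :
    (1 / (m : ℝ)) * (((1 : ℝ) - 1 / (m : ℝ)) ^ (m - (i + 1)) * (g OPT - g Si) - cSet c OPT) ≤
      Psi g c m i Si jstar estar :=
  Psi_lower_bound_general g c hc m V hV hgmono hgsub i Si hSV OPT hOPTdisj hOPTle hOPTcard jstar
    estar hmax
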